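/- arXiv:2307.06793 — 5 statements merged into one kernel-verified Lean document; each statement's English description precedes it below -/
import Mathlib

section
/- If x : [0,∞) → ℝ is differentiable, x(0) ≤ 1, x(t) ≥ 0, and x'(t) ≤ r·x(t)·(1 − x(t)) for all t ≥ 0 with r > 0, then x(t) ≤ 1 for all t ≥ 0. -/
theorem logistic_comparison (r : ℝ) (hr : 0 < r) (x : ℝ → ℝ)
    (hd : Differentiable ℝ x)
    (h0 : x 0 ≤ 1)
    (hnn : ∀ t, 0 ≤ t → 0 ≤ x t)
    (hode : ∀ t, 0 ≤ t → deriv x t ≤ r * x t * (1 - x t)) :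
    ∀ t, 0 ≤ t → x t ≤ 1 := by
  intro t ht
  by_contra h
  push_neg at h
  set S : Set ℝ := {u | u ∈ Set.Icc 0 t ∧ x u ≤ 1} with hS
  have hSne : S.Nonempty := ⟨0, ⟨le_refl 0, ht⟩, h0⟩
  have hSbdd : BddAbove S := ⟨t, fun u hu => hu.1.2⟩
  set s := sSup S with hs
  have hScl : IsClosed S := by
    have : S = Set.Icc 0 t ∩ x ⁻¹' Set.Iic 1 := by
      ext u; simp [hS, Set.mem_Icc, and_assoc]
    rw [this]
    exact isClosed_Icc.inter (isClosed_Iic.preimage hd.continuous)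
  have hsS : s ∈ S := hScl.csSup_mem hSne hSbdd
  have hs0 : 0 ≤ s := hsS.1.1
  have hst : s ≤ t := hsS.1.2
  have hxs : x s ≤ 1 := hsS.2
  have hgt : ∀ u, s < u → u ≤ t → 1 < x u := by
    intro u hsu hut
    by_contra hle
    push_neg at hle
    have : u ∈ S := ⟨⟨hs0.trans hsu.le, hut⟩, hle⟩
    exact absurd (le_csSup hSbdd this) (not_le.mpr hsu)
  have hanti : AntitoneOn x (Set.Icc s t) := by
    apply antitoneOn_of_deriv_nonpos (convex_Icc s t) hd.continuous.continuousOn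
      (fun u _ => (hd u).differentiableWithinAt)
    intro u hu
    rw [interior_Icc] at hu
    have hu0 : 0 ≤ u := hs0.trans hu.1.le
    have h1 : 1 < x u := hgt u hu.1 hu.2.le
    have := hode u hu0
    have : r * x u * (1 - x u) ≤ 0 := by
      apply mul_nonpos_of_nonneg_of_nonpos
      · positivity
      · linarith
    exact le_trans (hode u hu0) this
  have := hanti (Set.left_mem_Icc.mpr hst) (Set.right_mem_Icc.mpr hst) hst
  linarith
end

section
/- Let x : [0,T) → ℝ be differentiable with x(t) > 0, and suppose x'(t) ≤ r·x(t) − y(0)·exp(−α t)·√(x(t)) for all t ∈ [0,T), where r, α, y(0) > 0. Then for all t ∈ [0,T), √(x(t))·exp(−rt/2) ≤ √(x(0)) − (y(0)/(r + 2α))·(1 − exp(−(r/2 + α)t)). -/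
theorem sqrt_bound_from_diff_ineq (r α y0 T : ℝ) (hr : 0 < r) (hα : 0 < α) (hy0 : 0 < y0)
    (x : ℝ → ℝ) (hd : Differentiable ℝ x)
    (hpos : ∀ t, 0 ≤ t → t < T → 0 < x t)
    (hode : ∀ t, 0 ≤ t → t < T →
      deriv x t ≤ r * x t - y0 * Real.exp (-α * t) * Real.sqrt (x t)) :
    ∀ t, 0 ≤ t → t < T →
      Real.sqrt (x t) * Real.exp (-r * t / 2) ≤
        Real.sqrt (x 0) - (y0 / (r + 2*α)) * (1 - Real.exp (-(r/2 + α) * t)) := by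
  intro t ht htT
  set c : ℝ := y0 / (r + 2*α) with hc
  set g : ℝ → ℝ := fun s =>
    Real.sqrt (x s) * Real.exp (-r * s / 2) + c * (1 - Real.exp (-(r/2 + α) * s)) with hg
  set D : ℝ → ℝ := fun s =>
    (1 / (2 * Real.sqrt (x s)) * deriv x s) * Real.exp (-r * s / 2)
      + Real.sqrt (x s) * (Real.exp (-r * s / 2) * (-r / 2))
      + c * (0 - Real.exp (-(r/2 + α) * s) * (-(r/2 + α))) with hD
  have hderiv : ∀ s, 0 ≤ s → s < T → HasDerivAt g (D s) s := by
    intro s hs hsT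
    have hxs : 0 < x s := hpos s hs hsT
    have h1 : HasDerivAt (fun u => Real.sqrt (x u)) (1 / (2 * Real.sqrt (x s)) * deriv x s) s := by
      exact (Real.hasDerivAt_sqrt hxs.ne').comp s (hd s).hasDerivAt
    have h2 : HasDerivAt (fun u => Real.exp (-r * u / 2)) (Real.exp (-r * s / 2) * (-r / 2)) s := by
      have : HasDerivAt (fun u : ℝ => -r * u / 2) (-r / 2) s := by
        simpa using ((hasDerivAt_id s).const_mul (-r)).div_const 2
      exact this.exp
    have h3 : HasDerivAt (fun u => 1 - Real.exp (-(r/2 + α) * u))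
        (0 - Real.exp (-(r/2 + α) * s) * (-(r/2 + α))) s := by
      have hi : HasDerivAt (fun u : ℝ => -(r/2 + α) * u) (-(r/2 + α)) s := by
        simpa using (hasDerivAt_id s).const_mul (-(r/2 + α))
      exact (hasDerivAt_const s (1:ℝ)).sub hi.exp
    exact (h1.mul h2).add (h3.const_mul c)
  have hDle : ∀ s, 0 ≤ s → s < T → D s ≤ 0 := by
    intro s hs hsT
    have hxs : 0 < x s := hpos s hs hsT
    have hu : 0 < Real.sqrt (x s) := Real.sqrt_pos.mpr hxs
    have hxu : x s = Real.sqrt (x s) ^ 2 := (Real.sq_sqrt hxs.le).symm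
    have hE : 0 < Real.exp (-r * s / 2) := Real.exp_pos _
    have hea : 0 < Real.exp (-α * s) := Real.exp_pos _
    have hEE : Real.exp (-(r/2 + α) * s) = Real.exp (-α * s) * Real.exp (-r * s / 2) := by
      rw [← Real.exp_add]; ring_nf
    have hcv : c * (r/2 + α) = y0 / 2 := by
      rw [hc]; field_simp
    have hode' := hode s hs hsT
    rw [hD]
    simp only
    rw [hEE]
    have hkey : (1 / (2 * Real.sqrt (x s)) * deriv x s) ≤
        r * Real.sqrt (x s) / 2 - y0 * Real.exp (-α * s) / 2 := by
      have h2u : (0:ℝ) < 2 * Real.sqrt (x s) := by positivity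
      rw [one_div_mul_eq_div, div_le_iff₀ h2u]
      nlinarith [hode', hu, hxu]
    have h3 : c * (0 - Real.exp (-α * s) * Real.exp (-r * s / 2) * (-(r/2 + α)))
        = y0 / 2 * (Real.exp (-α * s) * Real.exp (-r * s / 2)) := by
      linear_combination (Real.exp (-α * s) * Real.exp (-r * s / 2)) * hcv
    rw [h3]
    nlinarith [mul_le_mul_of_nonneg_right hkey hE.le]
  have hanti : AntitoneOn g (Set.Icc 0 t) := by
    have hsub : ∀ s ∈ Set.Icc (0:ℝ) t, 0 ≤ s ∧ s < T := by
      intro s hsmem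
      exact ⟨hsmem.1, lt_of_le_of_lt hsmem.2 htT⟩
    apply AntitoneOn.mono (antitoneOn_of_deriv_nonpos (convex_Icc 0 t) ?_ ?_ ?_) (le_refl _)
    · intro s hsmem
      obtain ⟨h1, h2⟩ := hsub s hsmem
      exact (hderiv s h1 h2).continuousAt.continuousWithinAt
    · intro s hsmem
      rw [interior_Icc] at hsmem
      obtain ⟨h1, h2⟩ := hsub s (Set.mem_Icc_of_Ioo hsmem)
      exact ((hderiv s h1 h2).differentiableAt).differentiableWithinAt
    · intro s hsmem
      rw [interior_Icc] at hsmem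
      obtain ⟨h1, h2⟩ := hsub s (Set.mem_Icc_of_Ioo hsmem)
      rw [(hderiv s h1 h2).deriv]
      exact hDle s h1 h2
  have hgt : g t ≤ g 0 := hanti (Set.left_mem_Icc.mpr ht) (Set.right_mem_Icc.mpr ht) ht
  have hg0 : g 0 = Real.sqrt (x 0) := by simp [hg]
  rw [hg0] at hgt
  simp only [hg] at hgt
  linarith
end

section
/- Suppose r, α, y₀ > 0 and x₀ > 0 satisfy √(x₀) < y₀/(r + 2α), i.e., (r + 2α)·√(x₀) < y₀. If u : [0,∞) → ℝ satisfies u(0) = √(x₀), u(t) ≥ 0, and u(t)·exp(−rt/2) ≤ √(x₀) − (y₀/(r + 2α))·(1 − exp(−(r/2 + α)t)) for all t in the domain of positivity, then the right-hand side becomes negative for all sufficiently large t, so u cannot remain positive on all of [0,∞). -/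
theorem cannot_stay_positive (r α y0 x0 : ℝ) (hr : 0 < r) (hα : 0 < α) (hy0 : 0 < y0)
    (hx0 : 0 < x0) (hthr : (r + 2*α) * Real.sqrt x0 < y0)
    (u : ℝ → ℝ) (hu0 : u 0 = Real.sqrt x0)
    (hnn : ∀ t, 0 ≤ t → 0 ≤ u t)
    (hbound : ∀ t, 0 ≤ t → (∀ s, 0 ≤ s → s ≤ t → 0 < u s) →
      u t * Real.exp (-r * t / 2) ≤
        Real.sqrt x0 - (y0 / (r + 2*α)) * (1 - Real.exp (-(r/2 + α) * t))) :
    ¬ (∀ t, 0 ≤ t → 0 < u t) := by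
  intro hpos
  set c : ℝ := y0 / (r + 2*α) with hc
  have hsum : (0:ℝ) < r + 2*α := by linarith
  have hsx : 0 < Real.sqrt x0 := Real.sqrt_pos.mpr hx0
  have hcs : Real.sqrt x0 < c := by
    rw [hc, lt_div_iff₀ hsum]; linarith [hthr]
  have hcpos : 0 < c := lt_trans hsx hcs
  set ε : ℝ := (c - Real.sqrt x0) / c with hε
  have hεpos : 0 < ε := div_pos (by linarith) hcpos
  set k : ℝ := r/2 + α with hk
  have hkpos : 0 < k := by positivity
  set t : ℝ := (1 - Real.log ε) / k with ht
  have hε1 : ε < 1 := by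
    rw [hε, div_lt_one hcpos]; linarith
  have hlog : Real.log ε < 0 := Real.log_neg hεpos hε1
  have htpos : 0 < t := by
    rw [ht]; apply div_pos (by linarith) hkpos
  have hexp : Real.exp (-k * t) < ε := by
    have : -k * t = Real.log ε - 1 := by
      rw [ht]; field_simp; ring
    rw [this, Real.exp_sub, Real.exp_log hεpos]
    calc ε / Real.exp 1 < ε / 1 := by
          apply div_lt_div_of_pos_left hεpos one_pos
          linarith [Real.add_one_le_exp 1]
      _ = ε := by ring
  have hbd := hbound t htpos.le (fun s hs _ => hpos s hs)
  have hlhs : 0 < u t * Real.exp (-r * t / 2) :=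
    mul_pos (hpos t htpos.le) (Real.exp_pos _)
  have hrhs : Real.sqrt x0 - c * (1 - Real.exp (-(r/2 + α) * t)) < 0 := by
    have h1 : c * (1 - ε) < c * (1 - Real.exp (-(r/2 + α) * t)) := by
      apply mul_lt_mul_of_pos_left _ hcpos
      have : -(r/2 + α) * t = -k * t := by rw [hk]
      rw [this]; linarith [hexp]
    have h2 : c * (1 - ε) = Real.sqrt x0 := by
      rw [hε]; field_simp; ring
    linarith
  linarith
end

section
/- Let r, α, β > 0 and consider a solution (x,y) of dx/dt = rx(1−x) − y√x, dy/dt = −αy + βy√x with x(0) > 0, y(0) > 0, x(0) ≤ 1, defined on a maximal interval where x(t) > 0. If (r + 2α)·√(x(0)) < y(0), then x reaches 0 in finite time; that is, the prey goes extinct in finite time. -/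
theorem finite_time_prey_extinction (r α β : ℝ) (hr : 0 < r) (hα : 0 < α) (hβ : 0 < β)
    (x y : ℝ → ℝ) (hdx : Differentiable ℝ x) (hdy : Differentiable ℝ y)
    (hx0 : 0 < x 0) (hy0 : 0 < y 0) (hx01 : x 0 ≤ 1)
    (hxnn : ∀ t, 0 ≤ t → 0 ≤ x t) (hynn : ∀ t, 0 ≤ t → 0 ≤ y t)
    (hodex : ∀ t, 0 ≤ t → deriv x t = r * x t * (1 - x t) - y t * Real.sqrt (x t))
    (hodey : ∀ t, 0 ≤ t → deriv y t = -α * y t + β * y t * Real.sqrt (x t))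
    (hthr : (r + 2*α) * Real.sqrt (x 0) < y 0) :
    ∃ t, 0 < t ∧ x t = 0 := by
  by_contra hcon
  push_neg at hcon
  have hxpos : ∀ t, 0 ≤ t → 0 < x t := by
    intro t ht
    rcases eq_or_lt_of_le ht with h | h
    · rwa [← h]
    · exact lt_of_le_of_ne (hxnn t ht) (Ne.symm (hcon t h))
  set u : ℝ → ℝ := fun t => Real.sqrt (x t) with hu_def
  set V : ℝ → ℝ := fun t => y t - (r + 2*α) * u t with hV_def
  -- derivative of u
  have hu' : ∀ t, 0 ≤ t → HasDerivAt u (1 / (2 * Real.sqrt (x t)) * deriv x t) t := by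
    intro t ht
    exact (Real.hasDerivAt_sqrt (hxpos t ht).ne').comp t (hdx t).hasDerivAt
  have hV' : ∀ t, 0 ≤ t →
      HasDerivAt V (deriv y t - (r + 2*α) * (1 / (2 * Real.sqrt (x t)) * deriv x t)) t := by
    intro t ht
    exact (hdy t).hasDerivAt.sub ((hu' t ht).const_mul (r + 2*α))
  -- key pointwise inequalities
  have hs2 : ∀ t, 0 ≤ t → u t ^ 2 = x t := fun t ht => Real.sq_sqrt (hxnn t ht)
  have hspos : ∀ t, 0 ≤ t → 0 < u t := fun t ht => Real.sqrt_pos.mpr (hxpos t ht)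
  -- V' ≥ (r/2) V
  have hVineq : ∀ t, 0 ≤ t →
      r / 2 * V t ≤ deriv y t - (r + 2*α) * (1 / (2 * Real.sqrt (x t)) * deriv x t) := by
    intro t ht
    have hy' := hodey t ht
    have hx' := hodex t ht
    have hs := hspos t ht
    have hsx : Real.sqrt (x t) = u t := rfl
    rw [hy', hx', hsx]
    have h2 := hs2 t ht
    have hyt := hynn t ht
    have hterm : 1 / (2 * u t) * (r * x t * (1 - x t) - y t * u t)
        = (r * u t * (1 - u t ^ 2) - y t) / 2 := by
      rw [← h2]; field_simp
    rw [hterm]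
    have hVt : V t = y t - (r + 2*α) * u t := rfl
    rw [hVt]
    nlinarith [mul_nonneg (mul_nonneg hβ.le hyt) hs.le,
      mul_nonneg (mul_nonneg hr.le (by linarith : (0:ℝ) ≤ r + 2*α)) (pow_nonneg hs.le 3)]
  -- g = V * exp(-(r/2) t) is monotone on [0,∞)
  set g : ℝ → ℝ := fun t => V t * Real.exp (-(r/2) * t) with hg_def
  have hg' : ∀ t, 0 ≤ t → HasDerivAt g
      ((deriv y t - (r + 2*α) * (1 / (2 * Real.sqrt (x t)) * deriv x t)) * Real.exp (-(r/2) * t)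
        + V t * (Real.exp (-(r/2) * t) * (-(r/2)))) t := by
    intro t ht
    have he : HasDerivAt (fun t => Real.exp (-(r/2) * t)) (Real.exp (-(r/2) * t) * (-(r/2))) t := by
      simpa using ((hasDerivAt_id t).const_mul (-(r/2))).exp
    exact (hV' t ht).mul he
  have hucont : Continuous u := Real.continuous_sqrt.comp hdx.continuous
  have hVcont : Continuous V := hdy.continuous.sub (continuous_const.mul hucont)
  have hgcont : Continuous g := hVcont.mul (Real.continuous_exp.comp (continuous_const.mul continuous_id))
  have hgmono : MonotoneOn g (Set.Ici 0) := by
    apply monotoneOn_of_deriv_nonneg (convex_Ici 0) hgcont.continuousOn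
    · intro t ht
      rw [interior_Ici] at ht
      exact ((hg' t (le_of_lt ht)).differentiableAt).differentiableWithinAt
    · intro t ht
      rw [interior_Ici] at ht
      rw [(hg' t ht.le).deriv]
      have h1 := hVineq t ht.le
      have he : 0 < Real.exp (-(r/2) * t) := Real.exp_pos _
      nlinarith [mul_le_mul_of_nonneg_right h1 he.le]
  have hV0 : 0 < V 0 := by
    show 0 < y 0 - (r + 2*α) * Real.sqrt (x 0); linarith
  have hVge : ∀ t, 0 ≤ t → V 0 ≤ V t := by
    intro t ht
    have := hgmono (Set.mem_Ici.mpr le_rfl) (Set.mem_Ici.mpr ht) ht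
    simp only [hg_def, mul_zero, neg_zero, Real.exp_zero, mul_one] at this
    have he : Real.exp (-(r/2) * t) ≤ 1 := by
      apply Real.exp_le_one_iff.mpr
      nlinarith
    have hVtpos : 0 < V t := by
      by_contra hh
      push_neg at hh
      have h3 := mul_nonneg (neg_nonneg.2 hh) (Real.exp_pos (-(r/2) * t)).le
      nlinarith
    have h4 : V t * Real.exp (-(r/2) * t) ≤ V t := by
      simpa using mul_le_mul_of_nonneg_left he hVtpos.le
    exact le_trans this h4
  -- h = u + (V0/2) t is antitone on [0,∞)
  set c : ℝ := V 0 / 2 with hc_def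
  have hc : 0 < c := by positivity
  set h : ℝ → ℝ := fun t => u t + c * t with hh_def
  have hh' : ∀ t, 0 ≤ t →
      HasDerivAt h (1 / (2 * Real.sqrt (x t)) * deriv x t + c) t := by
    intro t ht
    exact (hu' t ht).add (by simpa using (hasDerivAt_id t).const_mul c)
  have hhmono : AntitoneOn h (Set.Ici 0) := by
    have hhcont : Continuous h := hucont.add (continuous_const.mul continuous_id)
    apply antitoneOn_of_deriv_nonpos (convex_Ici 0) hhcont.continuousOn
    · intro t ht
      rw [interior_Ici] at ht
      exact ((hh' t ht.le).differentiableAt).differentiableWithinAt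
    · intro t ht
      rw [interior_Ici] at ht
      rw [(hh' t ht.le).deriv, hodex t ht.le]
      have hs := hspos t ht.le
      have h2 := hs2 t ht.le
      have hVt := hVge t ht.le
      have hVt' : V t = y t - (r + 2*α) * u t := rfl
      have hsx : Real.sqrt (x t) = u t := rfl
      rw [hsx]
      rw [div_mul_eq_mul_div, div_add' _ _ _ (by positivity : (2 : ℝ) * u t ≠ 0),
        div_nonpos_iff]
      right
      have hc2 : 2 * c = V 0 := by rw [hc_def]; ring
      have hyeq : y t = V t + (r + 2*α) * u t := by rw [hVt']; ring
      constructor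
      · have hyu : y t * u t = V t * u t + (r + 2*α) * u t ^ 2 := by rw [hyeq]; ring
        rw [show x t = u t ^ 2 from h2.symm]
        nlinarith [mul_nonneg hs.le (by linarith : (0:ℝ) ≤ V t - 2*c),
          mul_nonneg hα.le (sq_nonneg (u t)),
          mul_nonneg hr.le (pow_nonneg hs.le 4)]
      · positivity
  -- contradiction for large t
  set T : ℝ := (u 0 + 1) / c with hT_def
  have hT : 0 < T := by positivity
  have := hhmono (Set.mem_Ici.mpr le_rfl) (Set.mem_Ici.mpr hT.le) hT.le
  simp only [hh_def, mul_zero, add_zero] at this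
  have hcT : c * T = u 0 + 1 := by
    rw [hT_def]; field_simp
  have hupos := (hspos T hT.le).le
  nlinarith
end

section
/- Suppose g : [0,∞) → ℝ is continuous with g(0) = √(x₀) > 0, and g(t) ≤ e^{rt/2}·(√(x₀) − (y₀/(r+2α))(1 − e^{−(r/2+α)t})) whenever g > 0 on [0,t], where (r+2α)√(x₀) < y₀. Then g attains the value 0 at some finite time t ≤ t* := −(2/(r+2α))·log(1 − (r+2α)√(x₀)/y₀). -/
theorem extinction_time_bound (r α y0 x0 : ℝ) (hr : 0 < r) (hα : 0 < α) (hy0 : 0 < y0)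
    (hx0 : 0 < x0) (hthr : (r + 2*α) * Real.sqrt x0 < y0)
    (g : ℝ → ℝ) (hc : Continuous g) (hg0 : g 0 = Real.sqrt x0)
    (hbound : ∀ t, 0 ≤ t → (∀ s, 0 ≤ s → s ≤ t → 0 < g s) →
      g t ≤ Real.exp (r * t / 2) *
        (Real.sqrt x0 - (y0 / (r + 2*α)) * (1 - Real.exp (-(r/2 + α) * t)))) :
    ∃ t, 0 ≤ t ∧ t ≤ -(2/(r + 2*α)) * Real.log (1 - (r + 2*α) * Real.sqrt x0 / y0) ∧
      g t = 0 := by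
  set c : ℝ := r + 2*α with hc'
  have hcpos : 0 < c := by positivity
  have hsx : 0 < Real.sqrt x0 := Real.sqrt_pos.mpr hx0
  set a : ℝ := 1 - c * Real.sqrt x0 / y0 with ha'
  have ha0 : 0 < a := by
    rw [ha', sub_pos]
    exact (div_lt_one hy0).mpr hthr
  have ha1 : a < 1 := by
    rw [ha']
    have h : 0 < c * Real.sqrt x0 / y0 := by positivity
    linarith
  have hloga : Real.log a < 0 := Real.log_neg ha0 ha1
  set T : ℝ := -(2/c) * Real.log a with hT'
  have hT0 : 0 ≤ T := by
    have h2c : 0 < 2/c := by positivity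
    nlinarith
  -- exponential identity at T
  have hexpT : Real.exp (-(r/2 + α) * T) = a := by
    have : -(r/2 + α) * T = Real.log a := by
      field_simp [hT']
      rw [hT', hc']
      have hne : r + 2*α ≠ 0 := by positivity
      have h2 : (r + 2*α) * (2 / (r + 2*α)) = 2 := by field_simp
      linear_combination (Real.log a) * h2
    rw [this, Real.exp_log ha0]
  have hrhs : Real.sqrt x0 - (y0 / c) * (1 - Real.exp (-(r/2 + α) * T)) = 0 := by
    rw [hexpT]
    have : (1 : ℝ) - a = c * Real.sqrt x0 / y0 := by rw [ha']; ring
    rw [this]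
    field_simp
    ring
  by_cases hpos : ∀ s, 0 ≤ s → s ≤ T → 0 < g s
  · have := hbound T hT0 hpos
    rw [hrhs, mul_zero] at this
    have := hpos T hT0 le_rfl
    linarith
  · push_neg at hpos
    obtain ⟨s, hs0, hsT, hgs⟩ := hpos
    have h0 : (0:ℝ) ∈ Set.Icc (g s) (g 0) := by
      constructor
      · exact hgs
      · rw [hg0]; exact hsx.le
    have := intermediate_value_Icc' hs0 hc.continuousOn h0
    obtain ⟨t, ht, hgt⟩ := this
    exact ⟨t, ht.1, le_trans ht.2 hsT, hgt⟩
end
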